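/- Let ψ be a k-encodable OHyperLTL_safe formula, let Π be a partial map from trace variables to concrete traces of length k, let Π̂ be a partial map from trace variables to symbolic traces of length k, and let ρ : V* → Val be an assignment with Π ≃_ρ Π̂. Then Π ⊨^k ψ holds if and only if ρ satisfies the symbolic encoding ⟦ψ⟧^k_Π̂. -/

import Mathlib

open scoped Classical

namespace HyperSE

variable {Val X L V : Type}

/-- Guarded-assignment instructions: deterministic assignment of (the shallow semantics of)
a term to a variable, or a nondeterministic assignment (`havoc`). -/
inductive Instr (Val X : Type) where
  | assign (x : X) (e : (X → Val) → Val)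
  | havoc (x : X)

/-- Concrete execution of an instruction on memories. -/
def Instr.exec : Instr Val X → (X → Val) → (X → Val) → Prop
  | .assign x e, m, m' => m' = Function.update m x (e m)
  | .havoc x, m, m' => ∃ v : Val, m' = Function.update m x v

/-- A program graph: edges between locations, an initial location, and an
instruction (`effect`) and a guard for every edge. -/
structure ProgramGraph (Val X L : Type) where
  edges : L → L → Prop
  init : L
  effect : L → L → Instr Val X
  guard : L → L → (X → Val) → Prop

/-- Execution states: a location together with a memory. -/
abbrev State (Val X L : Type) := L × (X → Val)

/-- The transition relation of a program graph. -/
def ProgramGraph.Step (G : ProgramGraph Val X L) (s₁ s₂ : State Val X L) : Prop :=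
  G.edges s₁.1 s₂.1 ∧ G.guard s₁.1 s₂.1 s₁.2 ∧ (G.effect s₁.1 s₂.1).exec s₁.2 s₂.2

/-- Finite traces: nonempty finite sequences of states starting in the initial state
(initial location together with the fixed initial memory `m₀`) and following `Step`. -/
def FinTraces (m₀ : X → Val) (G : ProgramGraph Val X L) : Set (List (State Val X L)) :=
  { τ | τ.head? = some (G.init, m₀) ∧ τ.Chain' G.Step }

/-- Projection `[σ]_O` of a finite trace onto the observed locations `O`. -/
noncomputable def obs (O : Set L) (σ : List (State Val X L)) : List (State Val X L) :=
  σ.filter fun s => decide (s.1 ∈ O)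

/-- `|σ|_O`: the number of observed states of `σ`. -/
noncomputable def obsLen (O : Set L) (σ : List (State Val X L)) : ℕ :=
  (obs O σ).length

/-- `Traces*_O(G)`: observational projections of the finite traces of `G`. -/
def TracesO (m₀ : X → Val) (G : ProgramGraph Val X L) (O : Set L) :
    Set (List (State Val X L)) :=
  { t | ∃ τ ∈ FinTraces m₀ G, t = obs O τ }

/-- `Traces^k_O(G)`: observational projections of length `k`. -/
def TracesKO (m₀ : X → Val) (G : ProgramGraph Val X L) (O : Set L) (k : ℕ) :
    Set (List (State Val X L)) :=
  { t | t ∈ TracesO m₀ G O ∧ t.length = k }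

/-- Infinite traces of a program graph. -/
def InfTraces (m₀ : X → Val) (G : ProgramGraph Val X L) : Set (ℕ → State Val X L) :=
  { σ | σ 0 = (G.init, m₀) ∧ ∀ i, G.Step (σ i) (σ (i + 1)) }

/-- `t` is the subsequence of `σ` consisting of exactly the states whose location is in `O`
(in particular `σ` has infinitely many observations). -/
def IsObsSubseq (O : Set L) (σ t : ℕ → State Val X L) : Prop :=
  ∃ f : ℕ → ℕ, StrictMono f ∧ (∀ n, t n = σ (f n)) ∧ (∀ n, (σ (f n)).1 ∈ O) ∧
    ∀ i, (σ i).1 ∈ O → ∃ n, f n = i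

/-- `Traces^ω_O(G)`: observational projections of the infinite traces of `G` that have
infinitely many observations. -/
def TracesOmegaO (m₀ : X → Val) (G : ProgramGraph Val X L) (O : Set L) :
    Set (ℕ → State Val X L) :=
  { t | ∃ σ ∈ InfTraces m₀ G, IsObsSubseq O σ t }

/-- OHyperLTL_safe formulas: a prefix of trace quantifiers (each annotated with a program
graph and a set of observed locations), followed by an invariant `□φ`, where the
quantifier-free formula `φ` is represented shallowly by a predicate on valuations of the
indexed variables `x_π`. -/
inductive HForm (Val X L V : Type) where
  | all (G : ProgramGraph Val X L) (O : Set L) (π : V) (ψ : HForm Val X L V)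
  | ex (G : ProgramGraph Val X L) (O : Set L) (π : V) (ψ : HForm Val X L V)
  | always (φ : (V → X → Val) → Prop)

/-- The valuation `Pi_i` (with default value `m₀ x` for unbound trace variables). -/
def memAt (m₀ : X → Val) (Pi : V → List (State Val X L)) (i : ℕ) : V → X → Val :=
  fun π x =>
    match (Pi π)[i]? with
    | some s => s.2 x
    | none => m₀ x

/-- Bounded semantics `Pi ⊨^k ψ`: quantifiers range over observed traces of length
exactly `k`, and the invariant is checked at positions `0 ≤ i < k`.
The empty (partial) trace assignment is modelled by the total map `fun _ => []`. -/
def SatK (m₀ : X → Val) (k : ℕ) :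
    HForm Val X L V → (V → List (State Val X L)) → Prop
  | .all G O π ψ, Pi => ∀ σ ∈ TracesKO m₀ G O k, SatK m₀ k ψ (Function.update Pi π σ)
  | .ex G O π ψ, Pi => ∃ σ ∈ TracesKO m₀ G O k, SatK m₀ k ψ (Function.update Pi π σ)
  | .always φ, Pi => ∀ i < k, φ (memAt m₀ Pi i)

/-- `⊨^k ψ` : satisfaction of `ψ` under the bounded semantics, starting from the empty
trace assignment. -/
def ModelsK (m₀ : X → Val) (k : ℕ) (ψ : HForm Val X L V) : Prop :=
  SatK m₀ k ψ fun _ => []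

/-- Upper-bounded semantics `⊨^{≤ n} ψ`. -/
def ModelsUpTo (m₀ : X → Val) (n : ℕ) (ψ : HForm Val X L V) : Prop :=
  ∀ k ≤ n, ModelsK m₀ k ψ

/-- Infinite-trace semantics `Pi ⊨^ω ψ`. -/
def SatOmega (m₀ : X → Val) :
    HForm Val X L V → (V → (ℕ → State Val X L)) → Prop
  | .all G O π ψ, Pi => ∀ σ ∈ TracesOmegaO m₀ G O, SatOmega m₀ ψ (Function.update Pi π σ)
  | .ex G O π ψ, Pi => ∃ σ ∈ TracesOmegaO m₀ G O, SatOmega m₀ ψ (Function.update Pi π σ)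
  | .always φ, Pi => ∀ i : ℕ, φ fun π x => (Pi π i).2 x

/-- `⊨^ω ψ` : satisfaction of `ψ` under the infinite-trace semantics, starting from the
empty trace assignment (modelled by the default environment). -/
def ModelsOmega [Inhabited L] (m₀ : X → Val) (ψ : HForm Val X L V) : Prop :=
  SatOmega m₀ ψ fun _ _ => (default, m₀)

/-- `G` is infinitely observable w.r.t. `O`: every observed trace with `k` observations is
a (length-`k`) prefix of some infinite observed trace. -/
def ProgramGraph.InfObs (m₀ : X → Val) (G : ProgramGraph Val X L) (O : Set L) : Prop :=
  ∀ k : ℕ, ∀ t ∈ TracesKO m₀ G O k, ∃ t' ∈ TracesOmegaO m₀ G O,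
    t = List.ofFn fun i : Fin k => t' i

/-- The list of quantified program graphs (with their observed locations) of a formula. -/
def HForm.graphs : HForm Val X L V → List (ProgramGraph Val X L × Set L)
  | .all G O _ ψ => (G, O) :: ψ.graphs
  | .ex G O _ ψ => (G, O) :: ψ.graphs
  | .always _ => []

/-- A formula is infinitely observable if all its quantified program graphs are. -/
def HForm.InfObs (m₀ : X → Val) (ψ : HForm Val X L V) : Prop :=
  ∀ p ∈ ψ.graphs, ProgramGraph.InfObs m₀ p.1 p.2

/-- `G` is `(k,O)`-observable: there is a bound `b` such that every finite trace with
exactly `k` observations has a prefix of length `< b` with the same `k` observations. -/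
def ProgramGraph.Observable (m₀ : X → Val) (G : ProgramGraph Val X L) (O : Set L)
    (k : ℕ) : Prop :=
  ∃ b : ℕ, ∀ τ ∈ FinTraces m₀ G, obsLen O τ = k →
    ∃ τ', τ' <+: τ ∧ obsLen O τ' = k ∧ τ'.length < b

/-! ### Symbolic execution

Symbolic variables are drawn from the countably infinite set `V* = ℕ` (one disjoint bank
of symbolic variables per trace variable is used when evaluating symbolic encodings of
formulas). Symbolic terms and path formulas are represented shallowly as functions of
assignments `ρ : ℕ → Val`. Fresh variables are chosen by a fixed deterministic scheme:
the symbolic state carries a counter of the used variables. -/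

/-- A symbolic state: a location, a path formula, a symbolic memory and the counter of
the fresh-variable scheme. -/
structure SymState (Val X L : Type) where
  loc : L
  path : (ℕ → Val) → Prop
  smem : X → (ℕ → Val) → Val
  ctr : ℕ

/-- Symbolic execution of an instruction on (symbolic memory, fresh counter) pairs. -/
def Instr.symExec : Instr Val X →
    ((X → (ℕ → Val) → Val) × ℕ) → ((X → (ℕ → Val) → Val) × ℕ) → Prop
  | .assign x e, p, p' =>
      p'.2 = p.2 ∧ p'.1 = Function.update p.1 x fun ρ => e fun y => p.1 y ρ
  | .havoc x, p, p' =>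
      p'.2 = p.2 + 1 ∧ p'.1 = Function.update p.1 x fun ρ => ρ p.2

/-- The symbolic transition relation: follow an edge, conjoin the (substituted) guard to
the path formula, require satisfiability, and symbolically execute the effect. -/
def ProgramGraph.SymStep (G : ProgramGraph Val X L) (s₁ s₂ : SymState Val X L) : Prop :=
  G.edges s₁.loc s₂.loc ∧
  s₂.path = (fun ρ => s₁.path ρ ∧ G.guard s₁.loc s₂.loc fun x => s₁.smem x ρ) ∧
  (∃ ρ, s₂.path ρ) ∧
  (G.effect s₁.loc s₂.loc).symExec (s₁.smem, s₁.ctr) (s₂.smem, s₂.ctr)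

/-- The initial symbolic state `⟨ℓ₀, true, m̂₀⟩` (with `m̂₀` evaluating to `m₀`). -/
def initSym (m₀ : X → Val) (G : ProgramGraph Val X L) : SymState Val X L :=
  ⟨G.init, fun _ => True, fun x _ => m₀ x, 0⟩

/-- `SymTraces*(G)`. -/
def SymTraces (m₀ : X → Val) (G : ProgramGraph Val X L) : Set (List (SymState Val X L)) :=
  { τ | τ.head? = some (initSym m₀ G) ∧ τ.Chain' G.SymStep }

/-- Projection of a symbolic trace onto observed locations. -/
noncomputable def obsSym (O : Set L) (τ : List (SymState Val X L)) :
    List (SymState Val X L) :=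
  τ.filter fun s => decide (s.loc ∈ O)

/-- `SymTraces*_O(G)`. -/
def SymTracesO (m₀ : X → Val) (G : ProgramGraph Val X L) (O : Set L) :
    Set (List (SymState Val X L)) :=
  { t | ∃ τ ∈ SymTraces m₀ G, t = obsSym O τ }

/-- `SymTraces^k_O(G)`. -/
def SymTracesKO (m₀ : X → Val) (G : ProgramGraph Val X L) (O : Set L) (k : ℕ) :
    Set (List (SymState Val X L)) :=
  { t | t ∈ SymTracesO m₀ G O ∧ t.length = k }

/-- `path(τ̂)`: the accumulated path formula of a symbolic trace (the path formula of its
last state). -/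
def pathOf (τ : List (SymState Val X L)) : (ℕ → Val) → Prop :=
  match τ.getLast? with
  | some s => s.path
  | none => fun _ => True

/-- The fresh-variable counter of (the last state of) a symbolic trace; the free symbolic
variables of the trace are exactly the variables below this counter. -/
def ctrOf (τ : List (SymState Val X L)) : ℕ :=
  match τ.getLast? with
  | some s => s.ctr
  | none => 0

/-- Concretization `γ_ρ(τ̂)` of a symbolic trace under an assignment `ρ` of the symbolic
variables. -/
def conc (ρ : ℕ → Val) (τ : List (SymState Val X L)) : List (State Val X L) :=
  τ.map fun s => (s.loc, fun x => s.smem x ρ)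

/-- Concretization `γ(T)` of a set of symbolic traces:
`γ(T) = ⋃_{τ̂ ∈ T} { γ_ρ(τ̂) | ρ ⊨ path(τ̂) }`. -/
def concSet (T : Set (List (SymState Val X L))) : Set (List (State Val X L)) :=
  { τ | ∃ t ∈ T, ∃ ρ, pathOf t ρ ∧ τ = conc ρ t }

/-- `ψ` is `k`-encodable: `SymTraces^k_O(G)` is finite for every quantified program. -/
def HForm.EncodableAt (m₀ : X → Val) (k : ℕ) (ψ : HForm Val X L V) : Prop :=
  ∀ p ∈ ψ.graphs, (SymTracesKO m₀ p.1 p.2 k).Finite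

/-- `ρ'` agrees with `ρ` except possibly on the symbolic variables of the bank of the
trace variable `π` below the counter `c` (i.e. except on `FV` of the trace bound to `π`). -/
def AgreesExc (π : V) (c : ℕ) (ρ ρ' : V → ℕ → Val) : Prop :=
  ∀ π' n, (π' ≠ π ∨ c ≤ n) → ρ' π' n = ρ π' n

/-- The symbolic valuation `Pî_i` (with default value `m₀ x` for unbound trace variables). -/
def smemAt (m₀ : X → Val) (Pih : V → List (SymState Val X L)) (ρ : V → ℕ → Val) (i : ℕ) :
    V → X → Val :=
  fun π x =>
    match (Pih π)[i]? with
    | some s => s.smem x (ρ π)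
    | none => m₀ x

/-- The symbolic encoding `⟦ψ⟧^k_Pî` of the bounded semantics, as a (shallow) first-order
formula over the symbolic variables (one bank `ρ π : ℕ → Val` per trace variable `π`):
universal quantification becomes a conjunction over all symbolic traces (universally
quantifying their free variables, guarded by the path condition), existential
quantification becomes a disjunction (existentially quantifying the free variables,
conjoined with the path condition), and `□φ` becomes the conjunction of the instances of
`φ` at positions `0 ≤ i < k`. -/
def Enc (m₀ : X → Val) (k : ℕ) :
    HForm Val X L V → (V → List (SymState Val X L)) → (V → ℕ → Val) → Prop
  | .all G O π ψ, Pih, ρ =>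
      ∀ t ∈ SymTracesKO m₀ G O k, ∀ ρ', AgreesExc π (ctrOf t) ρ ρ' →
        pathOf t (ρ' π) → Enc m₀ k ψ (Function.update Pih π t) ρ'
  | .ex G O π ψ, Pih, ρ =>
      ∃ t ∈ SymTracesKO m₀ G O k, ∃ ρ', AgreesExc π (ctrOf t) ρ ρ' ∧
        pathOf t (ρ' π) ∧ Enc m₀ k ψ (Function.update Pih π t) ρ'
  | .always φ, Pih, ρ => ∀ i < k, φ (smemAt m₀ Pih ρ i)

/-- `Pi ≃_ρ Pî`: the concrete trace assignment `Pi` is the concretization of the symbolic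
trace assignment `Pî` under `ρ` (and `ρ` satisfies all corresponding path conditions). -/
def SimRho (ρ : V → ℕ → Val) (Pi : V → List (State Val X L))
    (Pih : V → List (SymState Val X L)) : Prop :=
  ∀ π, pathOf (Pih π) (ρ π) ∧ Pi π = conc (ρ π) (Pih π)

end HyperSE

namespace HyperSE

section Aux

variable {Val X L V : Type}

/-- Auxiliary: dependence of a symbolic state only on variables below its counter. -/
def Dep (s : SymState Val X L) : Prop :=
  ∀ ρ₁ ρ₂ : ℕ → Val, (∀ n < s.ctr, ρ₁ n = ρ₂ n) →
    (s.path ρ₁ ↔ s.path ρ₂) ∧ ∀ x, s.smem x ρ₁ = s.smem x ρ₂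

lemma dep_initSym (m₀ : X → Val) (G : ProgramGraph Val X L) : Dep (initSym m₀ G) :=
  fun _ _ _ => ⟨Iff.rfl, fun _ => rfl⟩

lemma update_eval {mh : X → (ℕ → Val) → Val} {x : X} {g : (ℕ → Val) → Val} (ρ : ℕ → Val) :
    (fun y => Function.update mh x g y ρ) = Function.update (fun y => mh y ρ) x (g ρ) := by
  funext y
  by_cases h : y = x <;> simp [Function.update_apply, h]

lemma dep_step {G : ProgramGraph Val X L} {s s' : SymState Val X L}
    (hst : G.SymStep s s') (hd : Dep s) : Dep s' ∧ s.ctr ≤ s'.ctr := by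
  obtain ⟨he, hp, -, hex⟩ := hst
  cases hE : G.effect s.loc s'.loc with
  | assign x e =>
    rw [hE] at hex
    have hc' : s'.ctr = s.ctr := hex.1
    have hm' : s'.smem = Function.update s.smem x fun ρ => e fun y => s.smem y ρ := hex.2
    refine ⟨?_, le_of_eq hc'.symm⟩
    intro ρ₁ ρ₂ hag
    rw [hc'] at hag
    obtain ⟨hpiff, hsm⟩ := hd ρ₁ ρ₂ hag
    have hfun : (fun y => s.smem y ρ₁) = fun y => s.smem y ρ₂ := funext hsm
    constructor
    · show s'.path ρ₁ ↔ s'.path ρ₂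
      rw [hp]
      show (s.path ρ₁ ∧ _) ↔ (s.path ρ₂ ∧ _)
      rw [hfun, hpiff]
    · intro y
      rw [hm']
      by_cases h : y = x <;> simp [Function.update_apply, h, hsm, hfun]
  | havoc x =>
    rw [hE] at hex
    have hc' : s'.ctr = s.ctr + 1 := hex.1
    have hm' : s'.smem = Function.update s.smem x fun ρ => ρ s.ctr := hex.2
    refine ⟨?_, by omega⟩
    intro ρ₁ ρ₂ hag
    rw [hc'] at hag
    have hag' : ∀ n < s.ctr, ρ₁ n = ρ₂ n := fun n hn => hag n (by omega)
    obtain ⟨hpiff, hsm⟩ := hd ρ₁ ρ₂ hag'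
    have hfun : (fun y => s.smem y ρ₁) = fun y => s.smem y ρ₂ := funext hsm
    constructor
    · show s'.path ρ₁ ↔ s'.path ρ₂
      rw [hp]
      show (s.path ρ₁ ∧ _) ↔ (s.path ρ₂ ∧ _)
      rw [hfun, hpiff]
    · intro y
      rw [hm']
      have hctr : ρ₁ s.ctr = ρ₂ s.ctr := hag s.ctr (by omega)
      by_cases h : y = x <;> simp [Function.update_apply, h, hsm, hctr]

lemma step_of_symStep {G : ProgramGraph Val X L} {b a : SymState Val X L} (ρ : ℕ → Val)
    (hst : G.SymStep b a) (hpa : a.path ρ) :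
    G.Step (b.loc, fun x => b.smem x ρ) (a.loc, fun x => a.smem x ρ) := by
  obtain ⟨he, hp, -, hex⟩ := hst
  rw [hp] at hpa
  refine ⟨he, hpa.2, ?_⟩
  show (G.effect b.loc a.loc).exec _ _
  cases hE : G.effect b.loc a.loc with
  | assign x e =>
    rw [hE] at hex
    have hm : a.smem = Function.update b.smem x fun ρ => e fun y => b.smem y ρ := hex.2
    show (fun y => a.smem y ρ) = Function.update (fun y => b.smem y ρ) x (e fun y => b.smem y ρ)
    rw [hm]
    exact update_eval ρ
  | havoc x =>
    rw [hE] at hex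
    have hm : a.smem = Function.update b.smem x fun ρ => ρ b.ctr := hex.2
    refine ⟨ρ b.ctr, ?_⟩
    show (fun y => a.smem y ρ) = Function.update (fun y => b.smem y ρ) x (ρ b.ctr)
    rw [hm]
    exact update_eval ρ

lemma sound_chain {G : ProgramGraph Val X L} (ρ : ℕ → Val) :
    ∀ τ : List (SymState Val X L), τ.Chain' G.SymStep → pathOf τ ρ →
      (conc ρ τ).Chain' G.Step := by
  intro τ
  induction τ using List.reverseRecOn with
  | nil => intro _ _; simp [conc]; exact List.isChain_nil
  | append_singleton l a ih =>
    intro hch hpa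
    have hpa' : a.path ρ := by
      simpa [pathOf, List.getLast?_concat] using hpa
    rcases List.isChain_append.1 hch with ⟨hcl, -, hlast⟩
    have hpl : pathOf l ρ := by
      cases hgl : l.getLast? with
      | none => simp [pathOf, hgl]
      | some b =>
        have hst := hlast b hgl a (by simp)
        obtain ⟨-, hpth, -, -⟩ := hst
        rw [hpth] at hpa'
        simpa [pathOf, hgl] using hpa'.1
    show ((l ++ [a]).map _).Chain' G.Step
    rw [List.map_append]
    refine List.isChain_append.2 ⟨ih hcl hpl, by simp, ?_⟩
    intro x hx y hy
    simp only [List.map_cons, List.map_nil, List.head?_cons, Option.mem_def,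
      Option.some.injEq] at hy
    rw [List.getLast?_map] at hx
    simp only [Option.mem_def, Option.map_eq_some_iff] at hx
    obtain ⟨b, hgb, rfl⟩ := hx
    have hst := hlast b hgb a (by simp)
    subst hy
    exact step_of_symStep ρ hst hpa'

lemma ctrOf_cons_cons (a b : SymState Val X L) (l : List (SymState Val X L)) :
    ctrOf (a :: b :: l) = ctrOf (b :: l) := by
  simp only [ctrOf, List.getLast?_cons_cons]

lemma pathOf_cons_cons (a b : SymState Val X L) (l : List (SymState Val X L)) :
    pathOf (a :: b :: l) = pathOf (b :: l) := by
  simp only [pathOf, List.getLast?_cons_cons]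

lemma ctrOf_singleton (a : SymState Val X L) : ctrOf [a] = a.ctr := rfl

lemma pathOf_singleton (a : SymState Val X L) : pathOf [a] = a.path := rfl

lemma exists_symStep {G : ProgramGraph Val X L} {s0 : SymState Val X L} {ρ : ℕ → Val}
    (hd : Dep s0) (hpath : s0.path ρ) {l2 : L} {m' : X → Val}
    (he : G.edges s0.loc l2) (hg : G.guard s0.loc l2 fun x => s0.smem x ρ)
    (hex : (G.effect s0.loc l2).exec (fun x => s0.smem x ρ) m') :
    ∃ (s1 : SymState Val X L) (ρm : ℕ → Val),
      s1.loc = l2 ∧ G.SymStep s0 s1 ∧ s1.path ρm ∧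
      (∀ n < s0.ctr, ρm n = ρ n) ∧ (∀ n, s1.ctr ≤ n → ρm n = ρ n) ∧
      s0.ctr ≤ s1.ctr ∧ (fun x => s1.smem x ρm) = m' := by
  cases hE : G.effect s0.loc l2 with
  | assign x e =>
    rw [hE] at hex
    have hm' : m' = Function.update (fun y => s0.smem y ρ) x
        (e fun y => s0.smem y ρ) := hex
    refine ⟨⟨l2, fun ρ₀ => s0.path ρ₀ ∧ G.guard s0.loc l2 fun y => s0.smem y ρ₀,
      Function.update s0.smem x fun ρ₀ => e fun y => s0.smem y ρ₀, s0.ctr⟩, ρ,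
      rfl, ?_, ⟨hpath, hg⟩, fun _ _ => rfl, fun _ _ => rfl, le_refl _, ?_⟩
    · refine ⟨he, rfl, ⟨ρ, hpath, hg⟩, ?_⟩
      show (G.effect s0.loc l2).symExec _ _
      rw [hE]
      exact ⟨rfl, rfl⟩
    · show (fun y => Function.update s0.smem x
        (fun ρ₀ => e fun z => s0.smem z ρ₀) y ρ) = m'
      rw [update_eval ρ]
      exact hm'.symm
  | havoc x =>
    rw [hE] at hex
    have hex' : ∃ v : Val, m' = Function.update (fun y => s0.smem y ρ) x v := hex
    obtain ⟨v, hv⟩ := hex'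
    have hagm : ∀ n < s0.ctr, Function.update ρ s0.ctr v n = ρ n := by
      intro n hn
      exact Function.update_of_ne (ne_of_lt hn) _ _
    have hsmm : ∀ y, s0.smem y (Function.update ρ s0.ctr v) = s0.smem y ρ :=
      (hd _ ρ hagm).2
    have hguard : G.guard s0.loc l2 fun y => s0.smem y (Function.update ρ s0.ctr v) := by
      rw [funext hsmm]
      exact hg
    have hpath1 : s0.path (Function.update ρ s0.ctr v) := (hd _ ρ hagm).1.2 hpath
    refine ⟨⟨l2, fun ρ₀ => s0.path ρ₀ ∧ G.guard s0.loc l2 fun y => s0.smem y ρ₀,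
      Function.update s0.smem x fun ρ₀ => ρ₀ s0.ctr, s0.ctr + 1⟩,
      Function.update ρ s0.ctr v,
      rfl, ?_, ⟨hpath1, hguard⟩, hagm, ?_, Nat.le_succ _, ?_⟩
    · refine ⟨he, rfl, ⟨Function.update ρ s0.ctr v, hpath1, hguard⟩, ?_⟩
      show (G.effect s0.loc l2).symExec _ _
      rw [hE]
      exact ⟨rfl, rfl⟩
    · intro n hn
      have hn' : s0.ctr + 1 ≤ n := hn
      exact Function.update_of_ne (ne_of_gt hn') _ _
    · show (fun y => Function.update s0.smem x
        (fun ρ₀ => ρ₀ s0.ctr) y (Function.update ρ s0.ctr v)) = m'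
      rw [update_eval (Function.update ρ s0.ctr v)]
      show Function.update (fun y => s0.smem y (Function.update ρ s0.ctr v)) x
        (Function.update ρ s0.ctr v s0.ctr) = m'
      rw [funext hsmm, Function.update_self]
      exact hv.symm

lemma complete_chain {G : ProgramGraph Val X L} :
    ∀ (τ : List (State Val X L)) (s0 : SymState Val X L) (ρ : ℕ → Val),
      τ.Chain' G.Step → Dep s0 → s0.path ρ →
      τ.head? = some (s0.loc, fun x => s0.smem x ρ) →
      ∃ (th : List (SymState Val X L)) (ρ' : ℕ → Val),
        th.head? = some s0 ∧ th.Chain' G.SymStep ∧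
        (∀ n, n < s0.ctr ∨ ctrOf th ≤ n → ρ' n = ρ n) ∧
        s0.ctr ≤ ctrOf th ∧ pathOf th ρ' ∧ conc ρ' th = τ := by
  intro τ
  induction τ with
  | nil => intro s0 ρ _ _ _ h; simp at h
  | cons s ts ih =>
    intro s0 ρ hch hd hpath hhead
    have hs : s = (s0.loc, fun x => s0.smem x ρ) := by simpa using hhead
    subst hs
    cases ts with
    | nil =>
      refine ⟨[s0], ρ, rfl, List.isChain_singleton s0, fun n _ => rfl, ?_, ?_, rfl⟩
      · rw [ctrOf_singleton]
      · rw [pathOf_singleton]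
        exact hpath
    | cons s' rest =>
      replace hch := List.isChain_cons_cons.1 hch
      obtain ⟨hstep, hch'⟩ := hch
      obtain ⟨he, hg, hex⟩ := hstep
      have he' : G.edges s0.loc s'.1 := he
      have hg' : G.guard s0.loc s'.1 fun x => s0.smem x ρ := hg
      have hex' : (G.effect s0.loc s'.1).exec (fun x => s0.smem x ρ) s'.2 := hex
      obtain ⟨s1, ρm, hloc, hsym, hpath1, hbelow, habove, hctrle, hsmem⟩ :=
        exists_symStep hd hpath he' hg' hex'
      have hd1 : Dep s1 := (dep_step hsym hd).1
      have hhead1 : s' = (s1.loc, fun x => s1.smem x ρm) :=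
        Prod.ext hloc.symm hsmem.symm
      obtain ⟨th, ρ', hh1, hc1, hagr, hctr, hpth, hconc⟩ :=
        ih s1 ρm hch' hd1 hpath1 (by rw [List.head?_cons]; exact congrArg some hhead1)
      rcases th with - | ⟨b, tb⟩
      · simp at hh1
      have hb : b = s1 := by simpa using hh1
      subst hb
      refine ⟨s0 :: b :: tb, ρ', rfl, List.isChain_cons_cons.2 ⟨hsym, hc1⟩, ?_, ?_, ?_, ?_⟩
      · intro n hn
        rw [ctrOf_cons_cons] at hn
        rcases hn with hn | hn
        · rw [hagr n (Or.inl (by omega)), hbelow n hn]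
        · rw [hagr n (Or.inr hn)]
          exact habove n (le_trans hctr hn)
      · rw [ctrOf_cons_cons]
        exact le_trans hctrle hctr
      · rw [pathOf_cons_cons]
        exact hpth
      · have hcons : conc ρ' (s0 :: b :: tb) =
            (s0.loc, fun x => s0.smem x ρ') :: conc ρ' (b :: tb) := rfl
        show conc ρ' (s0 :: b :: tb) = _
        rw [hcons, hconc]
        congr 1
        refine Prod.ext rfl ?_
        funext y
        have hag' : ∀ n < s0.ctr, ρ' n = ρ n := by
          intro n hn
          rw [hagr n (Or.inl (by omega)), hbelow n hn]
        exact (hd ρ' ρ hag').2 y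

lemma head?_append_left {α : Type _} {l₁ l₂ : List α} (h : l₁ ≠ []) :
    (l₁ ++ l₂).head? = l₁.head? := by
  cases l₁ with
  | nil => exact absurd rfl h
  | cons a l => rfl

lemma exists_prefix_filter {α : Type _} (p : α → Bool) (l : List α)
    (h : l.filter p ≠ []) :
    ∃ l₁ l₂ a, l = l₁ ++ l₂ ∧ l₁.filter p = l.filter p ∧
      l₁.getLast? = some a ∧ p a = true := by
  induction l using List.reverseRecOn with
  | nil => simp at h
  | append_singleton l b ihl =>
    by_cases hb : p b
    · exact ⟨l ++ [b], [], b, by simp, rfl, List.getLast?_concat, hb⟩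
    · have hf : (l ++ [b]).filter p = l.filter p := by
        simp [List.filter_append, hb]
      rw [hf] at h
      obtain ⟨l₁, l₂, a, heq, hfil, hlast, hpa⟩ := ihl h
      exact ⟨l₁, l₂ ++ [b], a, by rw [heq, List.append_assoc],
        by rw [hf, hfil], hlast, hpa⟩

lemma getLast?_filter {α : Type _} {p : α → Bool} {l : List α} {a : α}
    (h : l.getLast? = some a) (ha : p a = true) :
    (l.filter p).getLast? = some a := by
  have hd := List.dropLast_append_getLast? a h
  rw [← hd, List.filter_append]
  simp [ha, List.getLast?_concat]

lemma obs_conc (O : Set L) (ρ : ℕ → Val) (τ : List (SymState Val X L)) :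
    obs O (conc ρ τ) = conc ρ (obsSym O τ) := by
  show (τ.map _).filter _ = (τ.filter _).map _
  rw [List.filter_map]
  rfl

lemma length_conc (ρ : ℕ → Val) (τ : List (SymState Val X L)) :
    (conc ρ τ).length = τ.length :=
  List.length_map _

lemma sound_trace {m₀ : X → Val} {G : ProgramGraph Val X L} {O : Set L} {k : ℕ}
    {t : List (SymState Val X L)} (ht : t ∈ SymTracesKO m₀ G O k)
    {ρ : ℕ → Val} (hp : pathOf t ρ) : conc ρ t ∈ TracesKO m₀ G O k := by
  obtain ⟨⟨τ, ⟨hh, hc⟩, rfl⟩, hlen⟩ := ht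
  by_cases h0 : obsSym O τ = []
  · have hk : (0 : ℕ) = k := by rw [h0] at hlen; simpa using hlen
    have hmem : initSym m₀ G ∈ τ := by
      cases τ with
      | nil => simp at hh
      | cons a tl =>
        have : a = initSym m₀ G := by simpa using hh
        rw [this]
        exact List.mem_cons_self
    have hnotO : ¬ (G.init ∈ O) := by
      intro hO
      have := List.filter_eq_nil_iff.1 h0 _ hmem
      simp only [initSym] at this
      exact this (by simp [hO])
    rw [h0]
    refine ⟨⟨[(G.init, m₀)], ⟨rfl, List.isChain_singleton _⟩, ?_⟩, ?_⟩
    · show conc ρ [] = obs O [(G.init, m₀)]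
      simp [conc, obs, hnotO]
    · simpa [conc] using hk
  · have h0' : τ.filter (fun s => decide (s.loc ∈ O)) ≠ [] := h0
    obtain ⟨l₁, l₂, a, heq, hfil, hlast, hpa⟩ :=
      exists_prefix_filter (fun s => decide (s.loc ∈ O)) τ h0'
    have hne : l₁ ≠ [] := by
      intro hnil
      rw [hnil] at hlast
      simp at hlast
    have hl₁ : l₁ ∈ SymTraces m₀ G := by
      constructor
      · rw [heq] at hh
        rwa [head?_append_left hne] at hh
      · rw [heq] at hc
        exact (List.isChain_append.1 hc).1
    have hpl₁eq : pathOf l₁ = a.path := by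
      simp only [pathOf, hlast]
    have htlast : (obsSym O τ).getLast? = some a := by
      show (τ.filter _).getLast? = some a
      rw [← hfil]
      exact getLast?_filter hlast hpa
    have hpteq : pathOf (obsSym O τ) = a.path := by
      simp only [pathOf, htlast]
    have hpa' : a.path ρ := by rw [← hpteq]; exact hp
    have hchain : (conc ρ l₁).Chain' G.Step :=
      sound_chain ρ l₁ hl₁.2 (by rw [hpl₁eq]; exact hpa')
    have hfin : conc ρ l₁ ∈ FinTraces m₀ G := by
      refine ⟨?_, hchain⟩
      show (l₁.map _).head? = _
      rw [List.head?_map, hl₁.1]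
      rfl
    have hobs : obs O (conc ρ l₁) = conc ρ (obsSym O τ) := by
      rw [obs_conc]
      show conc ρ (l₁.filter _) = conc ρ (τ.filter _)
      rw [hfil]
    refine ⟨⟨conc ρ l₁, hfin, hobs.symm⟩, ?_⟩
    rw [length_conc]
    exact hlen

lemma complete_trace {m₀ : X → Val} {G : ProgramGraph Val X L} {O : Set L} {k : ℕ}
    {σ : List (State Val X L)} (hσ : σ ∈ TracesKO m₀ G O k) (ρ : ℕ → Val) :
    ∃ t ∈ SymTracesKO m₀ G O k, ∃ ρ' : ℕ → Val,
      (∀ n, ctrOf t ≤ n → ρ' n = ρ n) ∧ pathOf t ρ' ∧ conc ρ' t = σ := by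
  obtain ⟨⟨τ, ⟨hh, hc⟩, rfl⟩, hlen⟩ := hσ
  by_cases h0 : obs O τ = []
  · have hmem : (G.init, m₀) ∈ τ := by
      cases τ with
      | nil => simp at hh
      | cons a tl =>
        have : a = (G.init, m₀) := by simpa using hh
        rw [this]
        exact List.mem_cons_self
    have hnotO : ¬ (G.init ∈ O) := by
      intro hO
      have := List.filter_eq_nil_iff.1 h0 _ hmem
      exact this (by simp [hO])
    refine ⟨[], ⟨⟨[initSym m₀ G], ⟨rfl, List.isChain_singleton _⟩, ?_⟩, ?_⟩,
      ρ, fun n _ => rfl, trivial, ?_⟩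
    · show ([] : List (SymState Val X L)) = obsSym O [initSym m₀ G]
      simp [obsSym, initSym, hnotO]
    · rw [h0] at hlen
      simpa using hlen
    · rw [h0]
      rfl
  · have h0' : τ.filter (fun s => decide (s.1 ∈ O)) ≠ [] := h0
    obtain ⟨l₁, l₂, a, heq, hfil, hlast, hpa⟩ :=
      exists_prefix_filter (fun s => decide (s.1 ∈ O)) τ h0'
    have hne : l₁ ≠ [] := by
      intro hnil
      rw [hnil] at hlast
      simp at hlast
    have hl₁ : l₁ ∈ FinTraces m₀ G := by
      constructor
      · rw [heq] at hh
        rwa [head?_append_left hne] at hh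
      · rw [heq] at hc
        exact (List.isChain_append.1 hc).1
    obtain ⟨th, ρ', hth, hthc, hagr, hctr0, hpth, hconc⟩ :=
      complete_chain l₁ (initSym m₀ G) ρ hl₁.2 (dep_initSym m₀ G) trivial hl₁.1
    -- the last state of `th` concretizes to the (observed) last state of `l₁`
    have hglast : (th.map fun s => ((s.loc, fun x => s.smem x ρ') :
        State Val X L)).getLast? = some a := by
      show (conc ρ' th).getLast? = some a
      rw [hconc]
      exact hlast
    rw [List.getLast?_map] at hglast
    obtain ⟨bb, hbb, hfb⟩ := Option.map_eq_some_iff.1 hglast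
    have hbloc : decide (bb.loc ∈ O) = true := by
      have : a.1 = bb.loc := by rw [← hfb]
      rw [← this]
      exact hpa
    have htlast : (obsSym O th).getLast? = some bb :=
      getLast?_filter hbb hbloc
    have hctr_t : ctrOf (obsSym O th) = ctrOf th := by
      simp only [ctrOf, htlast, hbb]
    have hpath_t : pathOf (obsSym O th) = pathOf th := by
      simp only [pathOf, htlast, hbb]
    have hconct : conc ρ' (obsSym O th) = obs O τ := by
      rw [← obs_conc, hconc]
      show l₁.filter _ = τ.filter _
      rw [hfil]
    refine ⟨obsSym O th, ⟨⟨th, ⟨hth, hthc⟩, rfl⟩, ?_⟩, ρ', ?_, ?_, hconct⟩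
    · have : (conc ρ' (obsSym O th)).length = (obs O τ).length := by rw [hconct]
      rw [length_conc] at this
      rw [this]
      exact hlen
    · intro n hn
      rw [hctr_t] at hn
      exact hagr n (Or.inr hn)
    · rw [hpath_t]
      exact hpth

lemma satK_iff_enc_aux (m₀ : X → Val) (k : ℕ) :
    ∀ (ψ : HForm Val X L V) (Pi : V → List (State Val X L))
      (Pih : V → List (SymState Val X L)) (ρ : V → ℕ → Val),
      HForm.EncodableAt m₀ k ψ →
      (∀ π, (Pi π).length = k ∧ (Pih π).length = k) →
      SimRho ρ Pi Pih →
      (SatK m₀ k ψ Pi ↔ Enc m₀ k ψ Pih ρ)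
  | .always φ, Pi, Pih, ρ, _, _, hsim => by
    have hmem : ∀ i, memAt m₀ Pi i = smemAt m₀ Pih ρ i := by
      intro i
      funext π x
      have h2 := (hsim π).2
      simp only [memAt, smemAt, h2, conc, List.getElem?_map]
      cases (Pih π)[i]? <;> rfl
    show (∀ i < k, φ (memAt m₀ Pi i)) ↔ ∀ i < k, φ (smemAt m₀ Pih ρ i)
    simp only [hmem]
  | .all G O π ψ, Pi, Pih, ρ, henc, hlen, hsim => by
    have hencψ : HForm.EncodableAt m₀ k ψ := by
      intro p hp
      exact henc p (List.mem_cons_of_mem _ hp)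
    show (∀ σ ∈ TracesKO m₀ G O k, SatK m₀ k ψ (Function.update Pi π σ)) ↔
      ∀ t ∈ SymTracesKO m₀ G O k, ∀ ρ', AgreesExc π (ctrOf t) ρ ρ' →
        pathOf t (ρ' π) → Enc m₀ k ψ (Function.update Pih π t) ρ'
    constructor
    · intro hs t ht ρ' hag hpt
      have hσ : conc (ρ' π) t ∈ TracesKO m₀ G O k := sound_trace ht hpt
      have hlen' : ∀ π', ((Function.update Pi π (conc (ρ' π) t)) π').length = k ∧
          ((Function.update Pih π t) π').length = k := by
        intro π'
        by_cases hππ : π' = π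
        · subst hππ
          simp only [Function.update_self, length_conc]
          exact ⟨ht.2, ht.2⟩
        · simp only [Function.update_of_ne hππ]
          exact hlen π'
      have hsim' : SimRho ρ' (Function.update Pi π (conc (ρ' π) t))
          (Function.update Pih π t) := by
        intro π'
        by_cases hππ : π' = π
        · subst hππ
          simp only [Function.update_self]
          exact ⟨hpt, True.intro⟩
        · have hρ : ρ' π' = ρ π' := funext fun n => hag π' n (Or.inl hππ)
          simp only [Function.update_of_ne hππ]; rw [hρ]
          exact hsim π'
      exact (satK_iff_enc_aux m₀ k ψ _ _ _ hencψ hlen' hsim').1 (hs _ hσ)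
    · intro he σ hσ
      obtain ⟨t, ht, ρs, hagf, hpt, hconc⟩ := complete_trace hσ (ρ π)
      have hup : Function.update ρ π ρs π = ρs := Function.update_self _ _ _
      have hag : AgreesExc π (ctrOf t) ρ (Function.update ρ π ρs) := by
        intro π' n hn
        by_cases hππ : π' = π
        · subst hππ
          rcases hn with hn | hn
          · exact absurd rfl hn
          · rw [hup]
            exact hagf n hn
        · rw [Function.update_of_ne hππ]
      have hpt' : pathOf t (Function.update ρ π ρs π) := by
        rw [hup]
        exact hpt
      have hEnc := he t ht (Function.update ρ π ρs) hag hpt'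
      have hlen' : ∀ π', ((Function.update Pi π σ) π').length = k ∧
          ((Function.update Pih π t) π').length = k := by
        intro π'
        by_cases hππ : π' = π
        · subst hππ
          simp only [Function.update_self]
          exact ⟨hσ.2, ht.2⟩
        · simp only [Function.update_of_ne hππ]
          exact hlen π'
      have hsim' : SimRho (Function.update ρ π ρs) (Function.update Pi π σ)
          (Function.update Pih π t) := by
        intro π'
        by_cases hππ : π' = π
        · subst hππ
          simp only [Function.update_self]
          exact ⟨hpt, hconc.symm⟩
        · simp only [Function.update_of_ne hππ]
          exact hsim π'
      exact (satK_iff_enc_aux m₀ k ψ _ _ _ hencψ hlen' hsim').2 hEnc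
  | .ex G O π ψ, Pi, Pih, ρ, henc, hlen, hsim => by
    have hencψ : HForm.EncodableAt m₀ k ψ := by
      intro p hp
      exact henc p (List.mem_cons_of_mem _ hp)
    show (∃ σ ∈ TracesKO m₀ G O k, SatK m₀ k ψ (Function.update Pi π σ)) ↔
      ∃ t ∈ SymTracesKO m₀ G O k, ∃ ρ', AgreesExc π (ctrOf t) ρ ρ' ∧
        pathOf t (ρ' π) ∧ Enc m₀ k ψ (Function.update Pih π t) ρ'
    constructor
    · intro hEx
      obtain ⟨σ, hσ, hsat⟩ := hEx
      obtain ⟨t, ht, ρs, hagf, hpt, hconc⟩ := complete_trace hσ (ρ π)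
      have hup : Function.update ρ π ρs π = ρs := Function.update_self _ _ _
      have hag : AgreesExc π (ctrOf t) ρ (Function.update ρ π ρs) := by
        intro π' n hn
        by_cases hππ : π' = π
        · subst hππ
          rcases hn with hn | hn
          · exact absurd rfl hn
          · rw [hup]
            exact hagf n hn
        · rw [Function.update_of_ne hππ]
      have hpt' : pathOf t (Function.update ρ π ρs π) := by
        rw [hup]
        exact hpt
      have hlen' : ∀ π', ((Function.update Pi π σ) π').length = k ∧
          ((Function.update Pih π t) π').length = k := by
        intro π'
        by_cases hππ : π' = π
        · subst hππ
          simp only [Function.update_self]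
          exact ⟨hσ.2, ht.2⟩
        · simp only [Function.update_of_ne hππ]
          exact hlen π'
      have hsim' : SimRho (Function.update ρ π ρs) (Function.update Pi π σ)
          (Function.update Pih π t) := by
        intro π'
        by_cases hππ : π' = π
        · subst hππ
          simp only [Function.update_self]
          exact ⟨hpt, hconc.symm⟩
        · simp only [Function.update_of_ne hππ]
          exact hsim π'
      exact ⟨t, ht, Function.update ρ π ρs, hag, hpt',
        (satK_iff_enc_aux m₀ k ψ _ _ _ hencψ hlen' hsim').1 hsat⟩
    · intro hEx
      obtain ⟨t, ht, ρ', hag, hpt, hEnc⟩ := hEx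
      have hσ : conc (ρ' π) t ∈ TracesKO m₀ G O k := sound_trace ht hpt
      have hlen' : ∀ π', ((Function.update Pi π (conc (ρ' π) t)) π').length = k ∧
          ((Function.update Pih π t) π').length = k := by
        intro π'
        by_cases hππ : π' = π
        · subst hππ
          simp only [Function.update_self, length_conc]
          exact ⟨ht.2, ht.2⟩
        · simp only [Function.update_of_ne hππ]
          exact hlen π'
      have hsim' : SimRho ρ' (Function.update Pi π (conc (ρ' π) t))
          (Function.update Pih π t) := by
        intro π'
        by_cases hππ : π' = π
        · subst hππ
          simp only [Function.update_self]
          exact ⟨hpt, True.intro⟩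
        · have hρ : ρ' π' = ρ π' := funext fun n => hag π' n (Or.inl hππ)
          simp only [Function.update_of_ne hππ]; rw [hρ]
          exact hsim π'
      exact ⟨conc (ρ' π) t, hσ,
        (satK_iff_enc_aux m₀ k ψ _ _ _ hencψ hlen' hsim').2 hEnc⟩


end Aux

/-- Let `ψ` be `k`-encodable, `Pi` a map from trace variables to concrete
traces of length `k`, `Pih` a map from trace variables to symbolic traces of length `k`,
and `ρ` an assignment of the symbolic variables with `Pi ≃_ρ Pih`. Then `Pi ⊨^k ψ` iff
`ρ` satisfies the symbolic encoding `⟦ψ⟧^k_Pih`. -/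
theorem satK_iff_enc {Val X L V : Type}
    (m₀ : X → Val) (k : ℕ) (ψ : HForm Val X L V)
    (henc : HForm.EncodableAt m₀ k ψ)
    (Pi : V → List (State Val X L)) (Pih : V → List (SymState Val X L))
    (hlen : ∀ π, (Pi π).length = k ∧ (Pih π).length = k)
    (ρ : V → ℕ → Val) (hsim : SimRho ρ Pi Pih) :
    SatK m₀ k ψ Pi ↔ Enc m₀ k ψ Pih ρ :=
  satK_iff_enc_aux m₀ k ψ Pi Pih ρ henc hlen hsim

end HyperSE
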